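/- Let u, v, x, y be points in the plane such that x lies in the negative cone C̄ᵥ,ᵢ₋₁ of v and y lies in the negative cone C̄ᵥ,ᵢ₊₁ of v, and x, y and v all lie in the cone C̄ᵤ,ᵢ of u. Then the projections of x and y onto the bisector of C̄ᵤ,ᵢ are both closer to u than the projection of v. -/

import Mathlib

open Real

/-- `v` lies in the open cone with apex `u`, bisector direction `β` and
half-angle `π/6`. -/
def inCone (β : ℝ) (u v : ℂ) : Prop :=
  v ≠ u ∧ |((v - u) * Complex.exp (-(β : ℂ) * Complex.I)).arg| < π / 6

/-- Signed length of the projection of `v - u` onto the direction `β`. -/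
noncomputable def projLen (β : ℝ) (u v : ℂ) : ℝ :=
  ((v - u) * Complex.exp (-(β : ℂ) * Complex.I)).re

/-- Bisector direction of the positive cone `Cᵢ` (counterclockwise, `C₀` up). -/
noncomputable def posBisector (i : Fin 3) : ℝ := π / 2 + 2 * π * (i : ℕ) / 3

/-- Bisector direction of the negative cone `C̄ᵢ`. -/
noncomputable def negBisector (i : Fin 3) : ℝ := posBisector i + π

lemma key (β c : ℝ) (hc : c = 2 * π / 3 ∨ c = -(2 * π / 3)) (v x : ℂ)
    (h : inCone (β + c) v x) : projLen β v x < 0 := by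
  obtain ⟨hne, harg⟩ := h
  push_cast at harg
  set w : ℂ := (x - v) * Complex.exp (-((β + c) : ℂ) * Complex.I) with hw
  have hw0 : w ≠ 0 := by
    apply mul_ne_zero
    · exact sub_ne_zero.mpr hne
    · exact Complex.exp_ne_zero _
  have habs : 0 < ‖w‖ := by
    simpa using norm_pos_iff.mpr hw0
  set θ : ℝ := w.arg with hθ
  have hre : w.re = ‖w‖ * Real.cos θ := by
    rw [Complex.cos_arg hw0]; field_simp
  have him : w.im = ‖w‖ * Real.sin θ := by
    rw [Complex.sin_arg]; field_simp
  -- rewrite projLen β v x as (w * exp(c I)).re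
  have hsplit : (x - v) * Complex.exp (-(β : ℂ) * Complex.I)
      = w * Complex.exp ((c : ℂ) * Complex.I) := by
    rw [hw, mul_assoc, ← Complex.exp_add]
    ring_nf
  have hval : projLen β v x = ‖w‖ * Real.cos (θ + c) := by
    rw [projLen, hsplit]
    rw [Complex.mul_re]
    have h1 : (Complex.exp ((c : ℂ) * Complex.I)).re = Real.cos c := by
      simp [Complex.exp_ofReal_mul_I_re]
    have h2 : (Complex.exp ((c : ℂ) * Complex.I)).im = Real.sin c := by
      simp [Complex.exp_ofReal_mul_I_im]
    rw [h1, h2, hre, him, Real.cos_add]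
    ring
  rw [hval]
  have hpi : (0:ℝ) < π := Real.pi_pos
  have hθlt : |θ| < π / 6 := by
    rw [hθ, hw]; exact harg
  have h1 := abs_lt.mp hθlt
  have hcos : Real.cos (θ + c) < 0 := by
    rcases hc with rfl | rfl
    · apply Real.cos_neg_of_pi_div_two_lt_of_lt <;> nlinarith [h1.1, h1.2]
    · rw [← Real.cos_neg]
      apply Real.cos_neg_of_pi_div_two_lt_of_lt <;> nlinarith [h1.1, h1.2]
  nlinarith

lemma projLen_add (β : ℝ) (u v x : ℂ) :
    projLen β u x = projLen β u v + projLen β v x := by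
  unfold projLen
  have : (x - u) * Complex.exp (-(β : ℂ) * Complex.I)
      = (v - u) * Complex.exp (-(β : ℂ) * Complex.I)
        + (x - v) * Complex.exp (-(β : ℂ) * Complex.I) := by ring
  rw [this, Complex.add_re]

/-- if `v, x, y` all lie in the negative cone `C̄ᵤ,ᵢ` of `u` while
`x` lies in the negative cone `C̄ᵥ,ᵢ₋₁` and `y` in the negative cone `C̄ᵥ,ᵢ₊₁` of
`v` (the two negative cones adjacent to `C̄ᵥ,ᵢ`, whose bisectors differ from that
of `C̄ᵥ,ᵢ` by `∓2π/3`), then the projections of `x` and `y` onto the bisector of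
`C̄ᵤ,ᵢ` are closer to `u` than the projection of `v`. -/
theorem stmt11 (u v x y : ℂ) (i : Fin 3)
    (hv : inCone (negBisector i) u v)
    (hx : inCone (negBisector i) u x)
    (hy : inCone (negBisector i) u y)
    (hxv : inCone (negBisector i - 2 * π / 3) v x)
    (hyv : inCone (negBisector i + 2 * π / 3) v y) :
    projLen (negBisector i) u x < projLen (negBisector i) u v ∧
    projLen (negBisector i) u y < projLen (negBisector i) u v := by
  have hx' : projLen (negBisector i) v x < 0 := by
    apply key _ (-(2 * π / 3)) (Or.inr rfl)
    simpa [sub_eq_add_neg] using hxv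
  have hy' : projLen (negBisector i) v y < 0 :=
    key _ (2 * π / 3) (Or.inl rfl) v y hyv
  constructor
  · rw [projLen_add (negBisector i) u v x]; linarith
  · rw [projLen_add (negBisector i) u v y]; linarith
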